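/- arXiv:1104.5065 — 5 statements merged into one kernel-verified Lean document; each statement's English description precedes it below -/
import Mathlib

section
/- For natural numbers n ≥ k ≥ 1, the coefficient of z^n in the formal power series ((1 - √(1-4z))/2)^k, where (1-√(1-4z))/2 is the generating function of Catalan numbers (i.e. the power series C(z) satisfying C(z) = z + C(z)², with C(0)=0), equals (k/n) · C(2n-k-1, n-1). -/
/-!
Since `f ^ (k + 1) = X * f ^ k + f ^ (k + 2)`, the numbers `a k m = [z ^ (k + m)] f ^ k` satisfy
`a (k + 1) (m + 1) = a k (m + 1) + a (k + 2) m`, with `a k 0 = 1` for `k ≠ 0` and `a 0 (m + 1) = 0`.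
The ballot numbers `k / (k + m) * C(k + 2m - 1, m)` obey the same recurrence (Pascal's rule plus
`C(N, m + 1) * (m + 1) = C(N, m) * (N - m)`), so the two agree by induction on `m`, then on `k`.
-/

open PowerSeries

/-- At `k = m = 0` this is `0`, because `0 / 0 = 0`, although `[z ^ 0] f ^ 0 = 1`. -/
def ballot (k m : ℕ) : ℚ := k / (k + m) * (k + 2 * m - 1).choose m

theorem ballot_zero_left (m : ℕ) : ballot 0 m = 0 := by
  simp [ballot]

theorem ballot_zero_right {k : ℕ} (hk : k ≠ 0) : ballot k 0 = 1 := by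
  simp [ballot, hk]

theorem ballot_succ_succ (k m : ℕ) :
    ballot (k + 1) (m + 1) = ballot k (m + 1) + ballot (k + 2) m := by
  have hpascal := Nat.choose_succ_succ' (k + 2 * m + 1) m
  have hratio := Nat.choose_succ_right_eq (k + 2 * m + 1) m
  rw [show k + 2 * m + 1 - m = k + m + 1 by omega] at hratio
  have hratio' : ((k + 2 * m + 1).choose (m + 1) : ℚ) * (m + 1) =
      (k + 2 * m + 1).choose m * (k + m + 1) := by
    exact_mod_cast hratio
  simp only [ballot, show k + 1 + 2 * (m + 1) - 1 = k + 2 * m + 1 + 1 by omega,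
    show k + 2 * (m + 1) - 1 = k + 2 * m + 1 by omega,
    show k + 2 + 2 * m - 1 = k + 2 * m + 1 by omega, hpascal]
  push_cast
  field_simp
  linear_combination (k + m + 2 : ℚ) * hratio'

namespace PowerSeries

variable {R : Type*} [CommSemiring R] {f : R⟦X⟧}

theorem coeff_self_pow_of_constantCoeff_eq_zero (h0 : constantCoeff f = 0) (k : ℕ) :
    coeff k (f ^ k) = coeff 1 f ^ k := by
  obtain ⟨g, rfl⟩ := X_dvd_iff.mpr h0
  rw [mul_pow, coeff_X_pow_mul', if_pos le_rfl, Nat.sub_self, coeff_zero_eq_constantCoeff,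
    map_pow, ← coeff_zero_eq_constantCoeff, ← coeff_succ_X_mul]

theorem coeff_pow_of_lt_of_constantCoeff_eq_zero (h0 : constantCoeff f = 0) {n k : ℕ}
    (h : n < k) : coeff n (f ^ k) = 0 :=
  coeff_of_lt_order n ((Nat.cast_lt.mpr h).trans_le (le_order_pow_of_constantCoeff_eq_zero k h0))

theorem coeff_one_of_eq_X_add_sq (h0 : constantCoeff f = 0) (hf : f = X + f ^ 2) :
    coeff 1 f = 1 := by
  rw [hf, map_add, coeff_one_X, coeff_pow_of_lt_of_constantCoeff_eq_zero h0 one_lt_two,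
    add_zero]

theorem coeff_self_pow_of_eq_X_add_sq (h0 : constantCoeff f = 0) (hf : f = X + f ^ 2)
    (k : ℕ) : coeff k (f ^ k) = 1 := by
  rw [coeff_self_pow_of_constantCoeff_eq_zero h0, coeff_one_of_eq_X_add_sq h0 hf, one_pow]

theorem coeff_succ_pow_succ_of_eq_X_add_sq (hf : f = X + f ^ 2) (n k : ℕ) :
    coeff (n + 1) (f ^ (k + 1)) = coeff n (f ^ k) + coeff (n + 1) (f ^ (k + 2)) := by
  have hpow : f ^ (k + 1) = X * f ^ k + f ^ (k + 2) :=
    calc f ^ (k + 1) = f * f ^ k := pow_succ' f k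
      _ = (X + f ^ 2) * f ^ k := by rw [← hf]
      _ = X * f ^ k + f ^ (k + 2) := by ring
  rw [hpow, map_add, coeff_succ_X_mul]

theorem coeff_add_pow_of_eq_X_add_sq {f : ℚ⟦X⟧} (h0 : constantCoeff f = 0)
    (hf : f = X + f ^ 2) {k m : ℕ} (hkm : k + m ≠ 0) : coeff (k + m) (f ^ k) = ballot k m := by
  induction m generalizing k with
  | zero => rw [add_zero, coeff_self_pow_of_eq_X_add_sq h0 hf, ballot_zero_right (by omega)]
  | succ m ihm =>
    induction k with
    | zero => simp [coeff_one, ballot_zero_left]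
    | succ k ihk =>
      calc coeff (k + 1 + (m + 1)) (f ^ (k + 1))
          = coeff (k + (m + 1)) (f ^ k) + coeff (k + 2 + m) (f ^ (k + 2)) := by
            rw [show k + 1 + (m + 1) = k + (m + 1) + 1 by omega,
              show k + 2 + m = k + (m + 1) + 1 by omega]
            exact coeff_succ_pow_succ_of_eq_X_add_sq hf _ _
        _ = ballot k (m + 1) + ballot (k + 2) m := by rw [ihk (by omega), ihm (by omega)]
        _ = ballot (k + 1) (m + 1) := (ballot_succ_succ k m).symm

end PowerSeries

theorem coeff_pow_catalan (f : PowerSeries ℚ) (h0 : PowerSeries.constantCoeff f = 0)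
    (hf : f = PowerSeries.X + f ^ 2) (n k : ℕ) (hk : 1 ≤ k) (hkn : k ≤ n) :
    PowerSeries.coeff n (f ^ k) = (k : ℚ) / n * ((2 * n - k - 1).choose (n - 1) : ℚ) := by
  obtain ⟨m, rfl⟩ := Nat.exists_eq_add_of_le hkn
  rw [coeff_add_pow_of_eq_X_add_sq h0 hf (by omega), ballot, Nat.cast_add,
    show 2 * (k + m) - k - 1 = k + 2 * m - 1 by omega,
    Nat.choose_symm_of_eq_add (show k + 2 * m - 1 = m + (k + m - 1) by omega)]
end

section
/- Let f ∈ R⟦z⟧ have zero constant term and invertible linear coefficient, and let y be its compositional inverse (so f ∘ y = y ∘ f = z). Denote F(n,k) = coeff of z^n in f^k and Y(n,k) = coeff of z^n in y^k. Then for all n ≥ m ≥ 1: ∑_{k=m}^{n} Y(n,k)·F(k,m) = δ(n,m) (Kronecker delta). -/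
/-- Composition `g(f(z))` of formal power series, for `f` with zero constant term. -/
noncomputable def PowerSeries.compose {R : Type*} [CommRing R] (g f : PowerSeries R) :
    PowerSeries R :=
  PowerSeries.mk fun n =>
    ∑ k ∈ Finset.range (n + 1), PowerSeries.coeff k g * PowerSeries.coeff n (f ^ k)

/-!
Because `X ^ k ∣ y ^ k`, the truncated sum defining `g.compose y` is the full substitution sum,
so `g ↦ g.compose y` is Mathlib's `PowerSeries.subst y`, a ring homomorphism. Hence
`(f ^ m).compose y = (f.compose y) ^ m = X ^ m`, and the sum in question is the `n`-th
coefficient of `(f ^ m).compose y`, the terms with `k < m` vanishing because `X ^ m ∣ f ^ m`.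
-/

open PowerSeries Finset

namespace PowerSeries

variable {R : Type*} [CommRing R]

theorem coeff_pow_eq_zero_of_lt {φ : R⟦X⟧} (hφ : constantCoeff φ = 0) {n k : ℕ} (h : n < k) :
    coeff n (φ ^ k) = 0 :=
  coeff_of_lt_order _ ((Nat.cast_lt.2 h).trans_le (le_order_pow_of_constantCoeff_eq_zero k hφ))

theorem compose_eq_subst (g : R⟦X⟧) {y : R⟦X⟧} (hy : constantCoeff y = 0) :
    g.compose y = g.subst y := by
  ext n
  rw [coeff_subst' (HasSubst.of_constantCoeff_zero' hy),
    finsum_eq_sum_of_support_subset (s := range (n + 1)) _ fun k hk => ?_]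
  · simp [compose, smul_eq_mul]
  · rw [coe_range, Set.mem_Iio]
    by_contra! hnk
    exact hk (by simp only [coeff_pow_eq_zero_of_lt hy (Nat.lt_of_succ_le hnk), smul_zero])

theorem compose_pow (g : R⟦X⟧) {y : R⟦X⟧} (hy : constantCoeff y = 0) (k : ℕ) :
    (g ^ k).compose y = g.compose y ^ k := by
  rw [compose_eq_subst _ hy, compose_eq_subst _ hy, subst_pow (HasSubst.of_constantCoeff_zero' hy)]

theorem coeff_pow_compose (f y : R⟦X⟧) (hf : constantCoeff f = 0) (m n : ℕ) :
    coeff n ((f ^ m).compose y) = ∑ k ∈ Icc m n, coeff n (y ^ k) * coeff k (f ^ m) := by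
  rw [compose, coeff_mk]
  simp_rw [mul_comm (coeff _ (f ^ m))]
  refine (sum_subset (fun k hk => ?_) fun k hk hkmn => ?_).symm
  · simp only [mem_Icc, mem_range] at hk ⊢
    omega
  · simp only [mem_Icc, mem_range, not_and, not_le] at hk hkmn
    rw [coeff_pow_eq_zero_of_lt hf (by omega), mul_zero]

end PowerSeries

theorem composita_inverse_general {R : Type*} [CommRing R] (f y : PowerSeries R)
    (hf0 : PowerSeries.constantCoeff f = 0)
    (hy0 : PowerSeries.constantCoeff y = 0)
    (hfy : PowerSeries.compose f y = PowerSeries.X)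
    (n m : ℕ) :
    ∑ k ∈ Finset.Icc m n,
        PowerSeries.coeff n (y ^ k) * PowerSeries.coeff k (f ^ m)
      = if n = m then 1 else 0 := by
  rw [← coeff_pow_compose f y hf0, compose_pow f hy0, hfy, coeff_X_pow]

theorem composita_inverse {R : Type*} [CommRing R] (f y : PowerSeries R)
    (hf0 : PowerSeries.constantCoeff f = 0) (hf1 : IsUnit (PowerSeries.coeff 1 f))
    (hy0 : PowerSeries.constantCoeff y = 0)
    (hfy : PowerSeries.compose f y = PowerSeries.X)
    (hyf : PowerSeries.compose y f = PowerSeries.X)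
    (n m : ℕ) (hm : 1 ≤ m) (hmn : m ≤ n) :
    ∑ k ∈ Finset.Icc m n,
        PowerSeries.coeff n (y ^ k) * PowerSeries.coeff k (f ^ m)
      = if n = m then 1 else 0 :=
  composita_inverse_general f y hf0 hy0 hfy n m
end

section
/- For a real number x ≠ 0 and naturals n ≥ k ≥ 1, the coefficient of z^n in the formal power series (1/(x+z) − 1/x)^k equals C(n-1, k-1)·(−1)^n·x^(−n−k). -/
/-!
Writing `a = 1/x`, the series is `a (1 + a z)⁻¹ - a = -a² z (1 + a z)⁻¹`, so its `k`-th power is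
`(-a²)ᵏ zᵏ (1 + a z)⁻ᵏ`. Rescaling `z ↦ -a z` in `(1 - z)⁻ᵏ = ∑ⱼ C(k-1+j, k-1) zʲ` gives
`(1 + a z)⁻ᵏ = ∑ⱼ C(k-1+j, k-1) (-a)ʲ zʲ`, and the coefficient of `zⁿ` is the term `j = n - k`.
-/

namespace PowerSeries

variable {K : Type*} [Field K]

theorem inv_one_add_C_mul_X (a : K) : (1 + C a * X)⁻¹ = rescale (-a) (mk 1) := by
  have hrescale : rescale (-a) (1 - X : K⟦X⟧) = 1 + C a * X := by
    rw [map_sub, map_one, rescale_X, map_neg, neg_mul, sub_neg_eq_add]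
  rw [inv_eq_iff_mul_eq_one (by simp), ← hrescale, ← map_mul, mk_one_mul_one_sub_eq_one, map_one]

theorem inv_one_add_C_mul_X_pow_succ (a : K) (d : ℕ) :
    (1 + C a * X)⁻¹ ^ (d + 1) = mk fun j ↦ (-a) ^ j * (d + j).choose d := by
  rw [inv_one_add_C_mul_X, ← map_pow, mk_one_pow_eq_mk_choose_add, rescale_mk]

theorem C_mul_inv_one_add_C_mul_X_sub_C (a : K) :
    C a * (1 + C a * X)⁻¹ - C a = C (-a ^ 2) * X * (1 + C a * X)⁻¹ := by
  have hunit : (1 + C a * X) * (1 + C a * X)⁻¹ = 1 := PowerSeries.mul_inv_cancel _ (by simp)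
  calc C a * (1 + C a * X)⁻¹ - C a
      = C a * (1 + C a * X)⁻¹ - C a * ((1 + C a * X) * (1 + C a * X)⁻¹) := by rw [hunit, mul_one]
    _ = C (-a ^ 2) * X * (1 + C a * X)⁻¹ := by rw [map_neg, map_pow]; ring

theorem coeff_pow_C_mul_inv_one_add_C_mul_X_sub_C (a : K) {n k : ℕ} (hk : 1 ≤ k) (hkn : k ≤ n) :
    coeff n ((C a * (1 + C a * X)⁻¹ - C a) ^ k) =
      (n - 1).choose (k - 1) * (-1) ^ n * a ^ (n + k) := by
  obtain ⟨d, rfl⟩ : ∃ d, k = d + 1 := ⟨k - 1, (Nat.sub_add_cancel hk).symm⟩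
  obtain ⟨m, rfl⟩ : ∃ m, n = d + 1 + m := ⟨n - (d + 1), (Nat.add_sub_cancel' hkn).symm⟩
  rw [C_mul_inv_one_add_C_mul_X_sub_C, mul_pow, mul_pow, ← map_pow, mul_assoc, coeff_C_mul,
    coeff_X_pow_mul', if_pos (Nat.le_add_right _ _), Nat.add_sub_cancel_left,
    inv_one_add_C_mul_X_pow_succ, coeff_mk, show d + 1 + m - 1 = d + m by omega,
    Nat.add_sub_cancel]
  ring

end PowerSeries

theorem coeff_pow_inv_shift_general (x : ℝ) (n k : ℕ) (hk : 1 ≤ k) (hkn : k ≤ n) :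
    PowerSeries.coeff (R := ℝ) n
        ((PowerSeries.C (R := ℝ) (1 / x) * (1 + PowerSeries.C (R := ℝ) (1 / x) * PowerSeries.X)⁻¹
            - PowerSeries.C (R := ℝ) (1 / x)) ^ k)
      = ((n - 1).choose (k - 1) : ℝ) * (-1) ^ n / x ^ (n + k) := by
  rw [PowerSeries.coeff_pow_C_mul_inv_one_add_C_mul_X_sub_C _ hk hkn, one_div_pow, mul_one_div]

theorem coeff_pow_inv_shift (x : ℝ) (hx : x ≠ 0) (n k : ℕ) (hk : 1 ≤ k) (hkn : k ≤ n) :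
    PowerSeries.coeff (R := ℝ) n
        ((PowerSeries.C (R := ℝ) (1 / x) * (1 + PowerSeries.C (R := ℝ) (1 / x) * PowerSeries.X)⁻¹
            - PowerSeries.C (R := ℝ) (1 / x)) ^ k)
      = ((n - 1).choose (k - 1) : ℝ) * (-1) ^ n / x ^ (n + k) :=
  coeff_pow_inv_shift_general x n k hk hkn
end

section
/- For natural m ≥ 1, real x ≠ 0, and naturals n ≥ k ≥ 1, the coefficient of z^n in the formal power series (1/(x+z)^m − 1/x^m)^k equals (∑_{j=1}^{k} C(k,j)·(−1)^(n+k−j)·C(n+j·m−1, j·m−1)) · x^(−n−k·m). -/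
open PowerSeries

lemma inv_one_add_CX (a : ℝ) :
    (1 + PowerSeries.C (R := ℝ) a * PowerSeries.X)⁻¹ = PowerSeries.rescale (-a) (PowerSeries.mk 1) := by
  rw [eq_comm, PowerSeries.eq_inv_iff_mul_eq_one]
  · have h1 : (1 + PowerSeries.C (R := ℝ) a * PowerSeries.X) =
        PowerSeries.rescale (-a) (1 - PowerSeries.X) := by
      ext n
      simp only [map_sub, PowerSeries.coeff_rescale, PowerSeries.coeff_one, PowerSeries.coeff_X,
        PowerSeries.coeff_C_mul, map_add, map_one, map_mul]
      rcases n with _ | _ | n <;> simp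
    rw [h1, ← map_mul, PowerSeries.mk_one_mul_one_sub_eq_one, map_one]
  · simp

lemma coeff_inv_one_add_CX_pow (a : ℝ) (N : ℕ) (hN : 1 ≤ N) (n : ℕ) :
    PowerSeries.coeff (R := ℝ) n (((1 + PowerSeries.C (R := ℝ) a * PowerSeries.X)⁻¹) ^ N)
      = (-a) ^ n * ((N - 1 + n).choose (N - 1) : ℝ) := by
  obtain ⟨d, rfl⟩ : ∃ d, N = d + 1 := ⟨N - 1, by omega⟩
  rw [inv_one_add_CX, ← map_pow, PowerSeries.mk_one_pow_eq_mk_choose_add,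
    PowerSeries.coeff_rescale, PowerSeries.coeff_mk]
  simp

theorem coeff_pow_inv_pow_shift (m : ℕ) (hm : 1 ≤ m) (x : ℝ) (hx : x ≠ 0)
    (n k : ℕ) (hk : 1 ≤ k) (hkn : k ≤ n) :
    PowerSeries.coeff (R := ℝ) n
        ((PowerSeries.C (R := ℝ) (1 / x ^ m) * ((1 + PowerSeries.C (R := ℝ) (1 / x) * PowerSeries.X)⁻¹) ^ m
            - PowerSeries.C (R := ℝ) (1 / x ^ m)) ^ k)
      = (∑ j ∈ Finset.Icc 1 k,
            (k.choose j : ℝ) * (-1) ^ (n + k - j) * ((n + j * m - 1).choose (j * m - 1) : ℝ))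
          / x ^ (n + k * m) := by
  set G : PowerSeries ℝ := (1 + PowerSeries.C (R := ℝ) (1 / x) * PowerSeries.X)⁻¹ with hG
  have hfac : (PowerSeries.C (R := ℝ) (1 / x ^ m) * G ^ m - PowerSeries.C (R := ℝ) (1 / x ^ m)) ^ k
      = PowerSeries.C (R := ℝ) ((1 / x ^ m) ^ k) * (G ^ m - 1) ^ k := by
    rw [map_pow, ← mul_pow, mul_sub, mul_one]
  rw [hfac, sub_pow, Finset.mul_sum, map_sum]
  have hcoef : ∀ j ∈ Finset.range (k + 1),
      PowerSeries.coeff (R := ℝ) n (PowerSeries.C (R := ℝ) ((1 / x ^ m) ^ k) *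
        ((-1) ^ (j + k) * (G ^ m) ^ j * (1 : PowerSeries ℝ) ^ (k - j) * (k.choose j : ℝ⟦X⟧)))
      = if 1 ≤ j then
          (1 / x ^ m) ^ k * ((-1 : ℝ) ^ (j + k) * ((-(1/x)) ^ n *
            ((j * m - 1 + n).choose (j * m - 1) : ℝ)) * (k.choose j : ℝ))
        else 0 := by
    intro j hj
    by_cases h1 : 1 ≤ j
    · rw [if_pos h1, one_pow, mul_one]
      have hjm : 1 ≤ j * m := Nat.one_le_iff_ne_zero.mpr (Nat.mul_ne_zero (by omega) (by omega))
      have hGm : (G ^ m) ^ j = G ^ (j * m) := by rw [← pow_mul, mul_comm]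
      have hstep : PowerSeries.C (R := ℝ) ((1 / x ^ m) ^ k) *
          ((-1) ^ (j + k) * (G ^ m) ^ j * (k.choose j : ℝ⟦X⟧))
          = PowerSeries.C (R := ℝ) ((1 / x ^ m) ^ k * (-1 : ℝ) ^ (j + k) * (k.choose j : ℝ))
              * G ^ (j * m) := by
        rw [hGm]
        simp only [map_mul, map_pow, map_neg, map_one, map_natCast]
        ring
      rw [hstep, PowerSeries.coeff_C_mul, hG, coeff_inv_one_add_CX_pow (1/x) (j*m) hjm n]
      ring
    · rw [if_neg h1]
      have hj0 : j = 0 := by omega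
      subst hj0
      have hstep : PowerSeries.C (R := ℝ) ((1 / x ^ m) ^ k) *
          ((-1) ^ (0 + k) * (G ^ m) ^ 0 * (1 : ℝ⟦X⟧) ^ (k - 0) * ((k.choose 0 : ℕ) : ℝ⟦X⟧))
          = PowerSeries.C (R := ℝ) ((1 / x ^ m) ^ k * (-1 : ℝ) ^ (0 + k)) := by
        simp only [pow_zero, one_pow, mul_one, Nat.choose_zero_right, Nat.cast_one,
          map_mul, map_pow, map_neg, map_one]
      rw [hstep, PowerSeries.coeff_C]
      have : n ≠ 0 := by omega
      simp [this]
  rw [Finset.sum_congr rfl hcoef, ← Finset.sum_filter]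
  have hset : (Finset.range (k + 1)).filter (fun j => 1 ≤ j) = Finset.Icc 1 k := by
    ext j; simp [Nat.lt_succ_iff]; omega
  rw [hset, Finset.sum_div]
  refine Finset.sum_congr rfl ?_
  intro j hj
  simp only [Finset.mem_Icc] at hj
  have hjm : 1 ≤ j * m := Nat.one_le_iff_ne_zero.mpr (Nat.mul_ne_zero (by omega) (by omega))
  have hch : ((j * m - 1 + n).choose (j * m - 1) : ℝ)
      = ((n + j * m - 1).choose (j * m - 1) : ℝ) := by congr 2; omega
  have hsign : (-1 : ℝ) ^ (n + k - j) = (-1) ^ (j + k) * (-1) ^ n := by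
    rw [← pow_add, show j + k + n = (n + k - j) + 2 * j by omega, pow_add, pow_mul]
    simp
  rw [hch, hsign, neg_pow]
  field_simp
  have hP : x ^ (m * k) * x⁻¹ ^ (m * k) = 1 := by rw [← mul_pow, mul_inv_cancel₀ hx, one_pow]
  have hQ : x ^ n * x⁻¹ ^ n = 1 := by rw [← mul_pow, mul_inv_cancel₀ hx, one_pow]
  linear_combination (((n + j * m - 1).choose (j * m - 1) : ℝ) * (k.choose j : ℝ) * (-1 : ℝ) ^ n * (x ^ n * x⁻¹ ^ n)) * hP + (((n + j * m - 1).choose (j * m - 1) : ℝ) * (k.choose j : ℝ) * (-1 : ℝ) ^ n) * hQ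
end

section
/- For naturals n, k with n ≥ k ≥ 1, the coefficient of z^n in the polynomial/power series (sin z)^k equals (1+(−1)^(n−k))/(2^k · n!) · ∑_{m=0}^{⌊k/2⌋} C(k,m)·(2m−k)^n·(−1)^((n+k)/2 − m), where the expression is interpreted as 0 when n−k is odd. -/
/-!
Over `ℂ`, `(2i sin z)^k = (e^{iz} - e^{-iz})^k = ∑ₘ (-1)^(m+k) C(k,m) e^{i(2m-k)z}`, so
`(2i)^k n! [zⁿ] sinᵏ = iⁿ ∑ₘ (-1)^(m+k) C(k,m) (2m-k)ⁿ`. The reflection `m ↦ k - m` multiplies the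
`m`-th term by `(-1)^(n+k)`: for `n + k` odd the sum vanishes, and for `n + k` even it is twice
the sum over `m ≤ k/2` (the middle term `m = k/2` vanishes as `n ≥ 1`). Finally
`i^(n+k) = (-1)^((n+k)/2)` makes everything real.
-/

open Finset Complex

namespace PowerSeries

theorem rescale_exp_pow {A : Type*} [CommRing A] [Algebra ℚ A] (a : A) (m : ℕ) :
    rescale a (exp A) ^ m = rescale (m * a) (exp A) := by
  rw [← map_pow, exp_pow_eq_rescale_exp, rescale_rescale]

theorem rescale_I_exp_sub_rescale_neg_I_exp :
    rescale I (exp ℂ) - rescale (-I) (exp ℂ) = C (2 * I) * sin ℂ := by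
  ext n
  simp only [map_sub, coeff_rescale, coeff_C_mul, coeff_exp, sin, coeff_mk]
  rcases Nat.even_or_odd n with hn | hn
  · simp [hn, hn.neg_pow]
  · obtain ⟨j, rfl⟩ := hn
    have hj : (2 * j + 1) / 2 = j := by omega
    simp [hj, pow_succ, pow_mul]
    ring

theorem C_two_I_mul_sin_pow (k : ℕ) :
    (C (2 * I) * sin ℂ) ^ k = ∑ m ∈ range (k + 1),
      C ((-1) ^ (m + k) * k.choose m : ℂ) * rescale ((2 * m - k) * I) (exp ℂ) := by
  rw [← rescale_I_exp_sub_rescale_neg_I_exp, sub_pow]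
  refine sum_congr rfl fun m hm => ?_
  have hexp : (2 * m - k) * I = m * I + (k - m : ℕ) * -I := by
    rw [Nat.cast_sub (Nat.lt_succ_iff.mp (mem_range.mp hm))]
    ring
  rw [rescale_exp_pow, rescale_exp_pow, hexp, ← exp_mul_exp_eq_exp_add]
  simp only [map_mul, map_pow, map_neg, map_one, map_natCast]
  ring

end PowerSeries

open PowerSeries

def sinPowTerm (k n m : ℕ) : ℝ := k.choose m * (-1) ^ (m + k) * (2 * m - k) ^ n

theorem two_I_pow_mul_coeff_sin_pow (k n : ℕ) :
    (2 * I) ^ k * coeff n (sin ℂ ^ k)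
      = I ^ n / n.factorial * ↑(∑ m ∈ range (k + 1), sinPowTerm k n m) := by
  rw [← coeff_C_mul, map_pow, ← mul_pow, C_two_I_mul_sin_pow, map_sum, ofReal_sum, mul_sum]
  refine sum_congr rfl fun m _ => ?_
  simp only [coeff_C_mul, coeff_rescale, coeff_exp, sinPowTerm, mul_pow]
  push_cast
  ring

theorem ofReal_coeff_sin_pow (k n : ℕ) :
    (↑(coeff n (sin ℝ ^ k)) : ℂ) = coeff n (sin ℂ ^ k) := by
  rw [← map_sin (algebraMap ℝ ℂ), ← map_pow, coeff_map]
  rfl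

theorem sinPowTerm_sub {k m : ℕ} (n : ℕ) (hm : m ≤ k) :
    sinPowTerm k n (k - m) = (-1) ^ (n + k) * sinPowTerm k n m := by
  have hsign : (-1 : ℝ) ^ (k - m + k) = (-1) ^ k * (-1) ^ (m + k) := by
    rw [← pow_add]
    exact neg_one_pow_congr (by simp only [Nat.even_iff]; omega)
  rw [sinPowTerm, sinPowTerm, Nat.choose_symm hm, hsign, Nat.cast_sub hm,
    show 2 * ((k : ℝ) - m) - k = -(2 * m - k) by ring, neg_pow (2 * (m : ℝ) - k)]
  ring

theorem sinPowTerm_of_two_mul_eq {k m n : ℕ} (h : 2 * m = k) (hn : n ≠ 0) :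
    sinPowTerm k n m = 0 := by
  simp [sinPowTerm, ← h, hn]

theorem neg_one_pow_mul_sinPowTerm {k n m : ℕ} (hm : m ≤ (n + k) / 2) :
    (-1) ^ ((n + k) / 2 + k) * sinPowTerm k n m
      = k.choose m * (2 * m - k) ^ n * (-1) ^ ((n + k) / 2 - m) := by
  have hsign : (-1 : ℝ) ^ ((n + k) / 2 + k) * (-1) ^ (m + k) = (-1) ^ ((n + k) / 2 - m) := by
    rw [← pow_add]
    exact neg_one_pow_congr (by simp only [Nat.even_iff]; omega)
  rw [sinPowTerm, ← hsign]
  ring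

theorem sum_range_succ_eq_two_nsmul_sum_range_half {M : Type*} [AddCommMonoid M] {f : ℕ → M}
    {k : ℕ} (hf : ∀ m ≤ k, f (k - m) = f m) (hmid : ∀ m, 2 * m = k → f m = 0) :
    ∑ m ∈ range (k + 1), f m = 2 • ∑ m ∈ range (k / 2 + 1), f m := by
  have hlow : ∑ m ∈ range (k - k / 2), f m = ∑ m ∈ range (k / 2 + 1), f m := by
    refine sum_subset (range_subset_range.mpr (by omega)) fun m hm hm' => hmid m ?_
    simp only [mem_range] at hm hm'
    omega
  have hhigh : ∑ m ∈ Ico (k / 2 + 1) (k + 1), f m = ∑ m ∈ range (k - k / 2), f m := calc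
    _ = ∑ m ∈ Ico (k + 1 - (k - k / 2)) (k + 1 - 0), f m := by
      rw [show k + 1 - (k - k / 2) = k / 2 + 1 by omega, Nat.sub_zero]
    _ = ∑ m ∈ range (k - k / 2), f (k - m) := by
      rw [range_eq_Ico, sum_Ico_reflect _ _ (by omega)]
    _ = _ := sum_congr rfl fun m hm => hf m (by simp only [mem_range] at hm; omega)
  rw [range_eq_Ico, ← sum_Ico_consecutive _ (Nat.zero_le _) (by omega : k / 2 + 1 ≤ k + 1),
    hhigh, hlow, ← range_eq_Ico, two_nsmul]

theorem sum_sinPowTerm_of_odd {k n : ℕ} (h : Odd (n + k)) :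
    ∑ m ∈ range (k + 1), sinPowTerm k n m = 0 := by
  have hreflect := sum_range_reflect (sinPowTerm k n) (k + 1)
  rw [sum_congr rfl fun m hm => by
    rw [Nat.add_sub_cancel, sinPowTerm_sub n (Nat.lt_succ_iff.mp (mem_range.mp hm)),
      h.neg_one_pow],
    ← mul_sum] at hreflect
  linarith

theorem sum_sinPowTerm_of_even {k n : ℕ} (h : Even (n + k)) (hn : n ≠ 0) :
    ∑ m ∈ range (k + 1), sinPowTerm k n m = 2 * ∑ m ∈ range (k / 2 + 1), sinPowTerm k n m := by
  rw [sum_range_succ_eq_two_nsmul_sum_range_half, nsmul_eq_mul, Nat.cast_ofNat]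
  · intro m hm
    rw [sinPowTerm_sub n hm, h.neg_one_pow, one_mul]
  · exact fun m hm => sinPowTerm_of_two_mul_eq hm hn

theorem coeff_sin_pow_of_odd {k n : ℕ} (h : Odd (n + k)) : coeff n (sin ℝ ^ k) = 0 := by
  have hcoeff := two_I_pow_mul_coeff_sin_pow k n
  rw [sum_sinPowTerm_of_odd h, ofReal_zero, mul_zero, ← ofReal_coeff_sin_pow] at hcoeff
  simpa [I_ne_zero] using hcoeff

theorem two_pow_mul_coeff_sin_pow {k n : ℕ} (h : Even (n + k)) :
    2 ^ k * coeff n (sin ℝ ^ k)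
      = (-1) ^ ((n + k) / 2 + k) / n.factorial * ∑ m ∈ range (k + 1), sinPowTerm k n m := by
  obtain ⟨j, hj⟩ := h
  have hcoeff := two_I_pow_mul_coeff_sin_pow k n
  rw [← ofReal_coeff_sin_pow] at hcoeff
  generalize coeff n (sin ℝ ^ k) = c at hcoeff ⊢
  generalize ∑ m ∈ range (k + 1), sinPowTerm k n m = S at hcoeff ⊢
  have hIk : I ^ k * I ^ k = (-1) ^ k := by rw [← mul_pow, I_mul_I]
  have hIn : I ^ k * I ^ n = (-1) ^ j := by rw [← pow_add, add_comm, hj, ← two_mul, pow_mul, I_sq]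
  have hsq : ((-1 : ℂ) ^ k) ^ 2 = 1 := by rw [← pow_mul, pow_mul', neg_one_sq, one_pow]
  apply ofReal_injective
  rw [show (n + k) / 2 = j by omega]
  push_cast
  -- multiply `hcoeff` by `(-1)^k i^k`
  linear_combination ((-1) ^ k * I ^ k) * hcoeff - 2 ^ k * c * hsq - 2 ^ k * (-1) ^ k * c * hIk
    + (-1) ^ k * S / n.factorial * hIn

theorem coeff_sin_pow_of_even {k n : ℕ} (h : Even (n + k)) (hn : n ≠ 0) :
    coeff n (sin ℝ ^ k) = 2 / (2 ^ k * n.factorial) * ∑ m ∈ range (k / 2 + 1),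
      (k.choose m : ℝ) * (2 * m - k) ^ n * (-1) ^ ((n + k) / 2 - m) := by
  have hcoeff := two_pow_mul_coeff_sin_pow h
  rw [sum_sinPowTerm_of_even h hn] at hcoeff
  rw [← sum_congr rfl fun m hm => neg_one_pow_mul_sinPowTerm (by rw [mem_range] at hm; omega),
    ← mul_sum]
  apply mul_left_cancel₀ (pow_ne_zero k two_ne_zero : (2 : ℝ) ^ k ≠ 0)
  rw [hcoeff]
  field_simp

theorem coeff_pow_sin (n k : ℕ) (hk : 1 ≤ k) (hkn : k ≤ n) :
    PowerSeries.coeff n ((PowerSeries.sin ℝ) ^ k)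
      = (1 + (-1 : ℝ) ^ (n - k)) / (2 ^ k * (Nat.factorial n : ℝ)) *
          ∑ m ∈ Finset.range (k / 2 + 1),
            (k.choose m : ℝ) * (2 * (m : ℝ) - (k : ℝ)) ^ n * (-1) ^ ((n + k) / 2 - m) := by
  have hparity : n + k = n - k + 2 * k := by omega
  rcases Nat.even_or_odd (n - k) with he | ho
  · rw [he.neg_one_pow, one_add_one_eq_two,
      coeff_sin_pow_of_even (hparity ▸ he.add (even_two_mul k)) (by omega)]
  · rw [ho.neg_one_pow, coeff_sin_pow_of_odd (hparity ▸ ho.add_even (even_two_mul k))]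
    norm_num
end
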